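/- Let σ, τ be permutations with τ decomposable, and let τ = τ₁ ⊕ ⋯ ⊕ τ_t be the finest decomposition of τ into indecomposable components. Then μ(σ,τ) = Σ ∏_{m=1}^{t} f(m), where the sum is over all decompositions σ = σ̃₁ ⊕ ⋯ ⊕ σ̃_t (components allowed to be empty) with σ̃_m ≤ τ_m for all m, and f(m) = μ(σ̃_m, τ_m) + 1 if σ̃_m = ∅ and τ_{m−1} = τ_m, and f(m) = μ(σ̃_m, τ_m) otherwise (the condition τ_{m−1} = τ_m is false when m = 1). -/

import Mathlib

open scoped Classical

/-- The set of all (finite) permutations, as patterns: a permutation of length `n`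
together with its length. -/
abbrev PermPt := Σ n : ℕ, Equiv.Perm (Fin n)

/-- Pattern containment order: `σ` occurs in `τ` if there is a strictly monotone
choice of positions on which `τ` is order-isomorphic to `σ`. -/
def ple (σ τ : PermPt) : Prop :=
  ∃ f : Fin σ.1 → Fin τ.1, StrictMono f ∧
    ∀ a b : Fin σ.1, σ.2 a ≤ σ.2 b ↔ τ.2 (f a) ≤ τ.2 (f b)

/-- Strict pattern containment. -/
def plt (σ τ : PermPt) : Prop := ple σ τ ∧ ¬ ple τ σ

/-- Direct sum of permutations. -/
def pds {m n : ℕ} (α : Equiv.Perm (Fin m)) (β : Equiv.Perm (Fin n)) :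
    Equiv.Perm (Fin (m + n)) :=
  finSumFinEquiv.symm.trans ((Equiv.sumCongr α β).trans finSumFinEquiv)

/-- Skew sum of permutations. -/
def pss {m n : ℕ} (α : Equiv.Perm (Fin m)) (β : Equiv.Perm (Fin n)) :
    Equiv.Perm (Fin (m + n)) :=
  finSumFinEquiv.symm.trans
    (((Equiv.sumCongr α β).trans (Equiv.sumComm (Fin m) (Fin n))).trans
      (finSumFinEquiv.trans (finCongr (Nat.add_comm n m))))

/-- Direct sum, as an operation on `PermPt`. -/
def pdsP (a b : PermPt) : PermPt := ⟨a.1 + b.1, pds a.2 b.2⟩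

/-- Skew sum, as an operation on `PermPt`. -/
def pssP (a b : PermPt) : PermPt := ⟨a.1 + b.1, pss a.2 b.2⟩

/-- The empty permutation. -/
def pempty : PermPt := ⟨0, 1⟩

/-- The permutation `1` of length one. -/
def pone : PermPt := ⟨1, 1⟩

/-- A permutation is decomposable if it is the direct sum of two nonempty
permutations, i.e. some proper nonempty initial segment of positions is mapped
to the corresponding initial segment of values. -/
def Decomp {n : ℕ} (σ : Equiv.Perm (Fin n)) : Prop :=
  ∃ m : ℕ, 0 < m ∧ m < n ∧ ∀ i : Fin n, (i : ℕ) < m → (σ i : ℕ) < m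

/-- Disconnectedness of a set of permutations under pattern containment:
it splits into two nonempty parts with no comparabilities between them. -/
def Disconn (S : Set PermPt) : Prop :=
  ∃ A B : Set PermPt, A ∪ B = S ∧ A.Nonempty ∧ B.Nonempty ∧
    ∀ x ∈ A, ∀ y ∈ B, ¬ ple x y ∧ ¬ ple y x

/-- Direct sum of a list of permutations. -/
def psum (l : List PermPt) : PermPt := l.foldr pdsP pempty

/-- `mu` is the Möbius function of the pattern poset (including the empty
permutation): `mu x x = 1`, `mu x z = 0` when `x ≰ z`, and the values of `mu`
on an interval `[x,z]` with `x < z` sum to zero. -/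
def IsMobius (mu : PermPt → PermPt → ℤ) : Prop :=
  (∀ x : PermPt, mu x x = 1) ∧
  (∀ x z : PermPt, ¬ ple x z → mu x z = 0) ∧
  (∀ x z : PermPt, ple x z → x ≠ z →
    ∑ᶠ y ∈ {y : PermPt | ple x y ∧ ple y z}, mu x y = 0)

/-!
Write `w_m(h) = μ(h, τ_m) + [h = ∅ ∧ τ_{m-1} = τ_m]` for the factors of the statement, so that
its right-hand side is `F(σ)` with `F(λ) = ∑ ∏_m w_m(g_m)` over the decompositions
`λ = g_1 ⊕ ⋯ ⊕ g_t` with `g_m ≤ τ_m`. Since `μ(·, τ)` is the only function whose sums over the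
intervals `[σ, τ]` are `δ(σ, τ)`, it suffices to show that `∑_{σ ≤ λ ≤ τ} F(λ)`, i.e. the sum of
`∏_m w_m(g_m)` over all `g_m ≤ τ_m` with `σ ≤ g_1 ⊕ ⋯ ⊕ g_t`, is `δ(σ, τ)`. This goes by induction
on `t`, splitting off `h = g_t`: `σ ≤ A ⊕ h` holds iff `L ≤ A`, where `L` is the shortest left
factor of a factorisation `σ = L ⊕ R` with `R ≤ h`. By induction only the `h` with
`L = τ' := τ_1 ⊕ ⋯ ⊕ τ_{t-1}` survive. If `σ = τ' ⊕ β`, the indecomposability of `τ_{t-1}` turns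
`L = τ'` into `β ≤ h ∧ τ_{t-1} ⊕ β ≰ h`, so the sum is a difference of two interval sums of `w_t`;
they give `δ(β, τ_t)`, the `+1` of `w_t` at `h = ∅` cancelling the term `δ(τ_{t-1} ⊕ β, τ_t)`,
which is nonzero only for `β = ∅`, `τ_{t-1} = τ_t`.
-/

open Finset IncidenceAlgebra

-- `a` as a function on `ℕ` (the identity beyond its length), so that index arithmetic
-- stays in `ℕ`.
noncomputable def pval (a : PermPt) (i : ℕ) : ℕ :=
  if h : i < a.1 then (a.2 ⟨i, h⟩ : ℕ) else i

section Values

variable {a b : PermPt} {i j : ℕ}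

lemma pval_of_lt (h : i < a.1) : pval a i = a.2 ⟨i, h⟩ := dif_pos h

lemma pval_lt (h : i < a.1) : pval a i < a.1 := by
  rw [pval_of_lt h]; exact Fin.isLt _

lemma pval_inj (hi : i < a.1) (hj : j < a.1) : pval a i = pval a j ↔ i = j := by
  rw [pval_of_lt hi, pval_of_lt hj, Fin.val_inj, a.2.injective.eq_iff, Fin.mk.injEq]

lemma exists_pval_eq (hi : i < a.1) : ∃ j < a.1, pval a j = i :=
  ⟨a.2.symm ⟨i, hi⟩, Fin.isLt _, by rw [pval_of_lt (Fin.isLt _)]; simp⟩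

lemma card_filter_pval_lt (hi : i < a.1) :
    #{j ∈ range a.1 | pval a j < pval a i} = pval a i := by
  conv_rhs => rw [← card_range (pval a i)]
  refine card_bij (fun j _ => pval a j) (fun j hj => ?_) (fun j hj k hk h => ?_) fun v hv => ?_
  · exact mem_range.2 (mem_filter.1 hj).2
  · exact (pval_inj (mem_range.1 (mem_filter.1 hj).1) (mem_range.1 (mem_filter.1 hk).1)).1 h
  · have hv : v < pval a i := mem_range.1 hv
    obtain ⟨j, hj, rfl⟩ := exists_pval_eq (hv.trans (pval_lt hi))
    exact ⟨j, mem_filter.2 ⟨mem_range.2 hj, hv⟩, rfl⟩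

lemma PermPt.ext_pval (h₁ : a.1 = b.1) (h₂ : ∀ i < a.1, pval a i = pval b i) : a = b := by
  obtain ⟨n, α⟩ := a
  obtain ⟨m, β⟩ := b
  obtain rfl : n = m := h₁
  congr 1
  ext i
  have := h₂ i i.2
  simp only [pval, i.2, dif_pos] at this
  simpa using this

noncomputable def PermPt.ofInjOn (n : ℕ) (f : ℕ → ℕ) (hf : ∀ i < n, f i < n)
    (hinj : ∀ i < n, ∀ j < n, f i = f j → i = j) : PermPt :=
  ⟨n, Equiv.ofBijective (fun i => ⟨f i, hf i i.2⟩) <| Finite.injective_iff_bijective.1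
    fun i j h => Fin.ext (hinj i i.2 j j.2 (Fin.mk.inj_iff.1 h))⟩

lemma pval_ofInjOn {n : ℕ} {f : ℕ → ℕ} {hf hinj} (hi : i < n) :
    pval (PermPt.ofInjOn n f hf hinj) i = f i := by
  rw [pval_of_lt (a := PermPt.ofInjOn n f hf hinj) hi]
  rfl

lemma pds_castAdd {m n : ℕ} (α : Equiv.Perm (Fin m)) (β : Equiv.Perm (Fin n)) (x : Fin m) :
    pds α β (Fin.castAdd n x) = Fin.castAdd n (α x) := by
  simp [pds]

lemma pds_natAdd {m n : ℕ} (α : Equiv.Perm (Fin m)) (β : Equiv.Perm (Fin n)) (x : Fin n) :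
    pds α β (Fin.natAdd m x) = Fin.natAdd m (β x) := by
  simp [pds]

lemma pval_pdsP_of_lt (h : i < a.1) : pval (pdsP a b) i = pval a i := by
  rw [pval_of_lt (show i < (pdsP a b).1 from Nat.lt_add_right _ h), pval_of_lt h]
  exact congrArg Fin.val (pds_castAdd a.2 b.2 ⟨i, h⟩)

lemma pval_pdsP_of_le (h₁ : a.1 ≤ i) (h₂ : i < a.1 + b.1) :
    pval (pdsP a b) i = a.1 + pval b (i - a.1) := by
  have hi : i - a.1 < b.1 := by omega
  have hcast : (⟨i, h₂⟩ : Fin (a.1 + b.1)) = Fin.natAdd a.1 ⟨i - a.1, hi⟩ := by ext; simp; omega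
  rw [pval_of_lt (show i < (pdsP a b).1 from h₂), pval_of_lt hi]
  exact congrArg Fin.val ((congrArg (pds a.2 b.2) hcast).trans (pds_natAdd a.2 b.2 _))

end Values

section Order

variable {a b : PermPt}

lemma ple_len (h : ple a b) : a.1 ≤ b.1 := by
  obtain ⟨f, hf, -⟩ := h
  simpa using Fintype.card_le_of_injective f hf.injective

lemma eq_of_ple_of_len_le (h : ple a b) (hl : b.1 ≤ a.1) : a = b := by
  have hlen := le_antisymm (ple_len h) hl
  obtain ⟨f, hf, hp⟩ := h
  obtain ⟨n, α⟩ := a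
  obtain ⟨m, β⟩ := b
  obtain rfl : n = m := hlen
  obtain rfl : f = id := hf.eq_id
  simp only [id] at hp
  have hmono : StrictMono (β ∘ α.symm) := fun x y hxy => by
    rw [Function.comp_apply, Function.comp_apply, lt_iff_not_ge, ← hp,
      Equiv.apply_symm_apply, Equiv.apply_symm_apply, not_le]
    exact hxy
  congr 1
  ext i
  simpa using (congrArg Fin.val (congrFun hmono.eq_id (α i))).symm

instance : PartialOrder PermPt where
  le := ple
  le_refl _ := ⟨id, strictMono_id, fun _ _ => Iff.rfl⟩
  le_trans _ _ _ := fun ⟨f, hf, hpf⟩ ⟨g, hg, hpg⟩ =>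
    ⟨g ∘ f, hg.comp hf, fun x y => (hpf x y).trans (hpg (f x) (f y))⟩
  le_antisymm _ _ h₁ h₂ := eq_of_ple_of_len_le h₁ (ple_len h₂)

lemma pempty_le (a : PermPt) : pempty ≤ a :=
  ⟨Fin.elim0, fun i => i.elim0, fun i => i.elim0⟩

lemma eq_pempty_of_len_eq_zero (h : a.1 = 0) : a = pempty :=
  PermPt.ext_pval h fun i hi => by omega

lemma le_pempty_iff : a ≤ pempty ↔ a = pempty :=
  ⟨fun h => eq_pempty_of_len_eq_zero (Nat.le_zero.1 (ple_len h)), fun h => h ▸ le_rfl⟩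

lemma finite_setOf_len_le (N : ℕ) : {y : PermPt | y.1 ≤ N}.Finite :=
  ((Set.finite_Iic N).biUnion fun n _ => Set.finite_range (Sigma.mk n)).subset
    fun y hy => Set.mem_biUnion hy ⟨y.2, rfl⟩

noncomputable instance : LocallyFiniteOrder PermPt :=
  .ofFiniteIcc fun _ b => (finite_setOf_len_le b.1).subset fun _ hy => ple_len hy.2

end Order

section Mobius

open OrderDual

variable {α : Type*} [PartialOrder α] [LocallyFiniteOrder α] [DecidableEq α]

theorem eq_mu_of_sum_Icc_left {f : α → ℤ} {b : α}
    (hf : ∀ a ≤ b, ∑ x ∈ Icc a b, f x = if a = b then 1 else 0) {a : α} (ha : a ≤ b) :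
    f a = mu ℤ a b := by
  induction hn : #(Icc a b) using Nat.strong_induction_on generalizing a with
  | _ n ih =>
  obtain rfl | hab := eq_or_ne a b
  · simpa using hf a le_rfl
  have hsum := hf a ha
  rw [if_neg hab, Icc_eq_cons_Ioc ha, sum_cons] at hsum
  rw [mu_eq_neg_sum_Ioc_of_ne hab, eq_neg_iff_add_eq_zero, ← hsum]
  congr 1
  refine sum_congr rfl fun x hx => ?_
  rw [mem_Ioc] at hx
  exact (ih _ (hn ▸ card_lt_card (Icc_ssubset_Icc_left ha hx.1 le_rfl)) hx.2 rfl).symm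

theorem eq_mu_of_sum_Icc_right {f : α → ℤ} {a : α}
    (hf : ∀ b, a ≤ b → ∑ x ∈ Icc a b, f x = if a = b then 1 else 0) {b : α} (hb : a ≤ b) :
    f b = mu ℤ a b := by
  have hdual := eq_mu_of_sum_Icc_left (α := αᵒᵈ) (f := f ∘ ofDual) (b := toDual a)
    (fun c hc => by
      rw [Icc_orderDual_def, sum_map, ofDual_toDual]
      simpa only [eq_comm (a := a), ← ofDual_inj (a := c), ofDual_toDual, Function.comp_apply,
        Equiv.toEmbedding_apply] using hf (ofDual c) hc)
    (a := toDual b) hb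
  simpa using hdual

end Mobius

theorem IsMobius.eq_mu {m : PermPt → PermPt → ℤ} (hm : IsMobius m) :
    m = fun a b => mu ℤ a b := by
  funext a b
  by_cases hab : a ≤ b
  · refine eq_mu_of_sum_Icc_right (f := m a) (fun c hc => ?_) hab
    split_ifs with h
    · subst h; simp [hm.1]
    · rw [← finsum_mem_coe_finset, coe_Icc]; exact hm.2.2 a c hc h
  · rw [hm.2.1 a b hab, apply_eq_zero_of_not_le hab]

section DirectSum

variable {a b c : PermPt} {i : ℕ}

lemma pdsP_fst (a b : PermPt) : (pdsP a b).1 = a.1 + b.1 := rfl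

lemma pval_pdsP_add (hi : i < b.1) : pval (pdsP a b) (a.1 + i) = a.1 + pval b i := by
  rw [pval_pdsP_of_le (Nat.le_add_right _ _) (by omega), Nat.add_sub_cancel_left]

lemma pempty_fst : pempty.1 = 0 := rfl

lemma pdsP_pempty (a : PermPt) : pdsP a pempty = a :=
  PermPt.ext_pval rfl fun _ hi => pval_pdsP_of_lt hi

lemma pempty_pdsP (a : PermPt) : pdsP pempty a = a :=
  PermPt.ext_pval (Nat.zero_add _) fun i hi => by
    rw [pval_pdsP_of_le (Nat.zero_le _) hi, pempty_fst, Nat.zero_add, Nat.sub_zero]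

lemma pdsP_assoc (a b c : PermPt) : pdsP (pdsP a b) c = pdsP a (pdsP b c) := by
  refine PermPt.ext_pval (Nat.add_assoc ..) fun i hi => ?_
  simp only [pdsP_fst] at hi
  have hab := pdsP_fst a b
  have hbc := pdsP_fst b c
  rcases lt_or_ge i a.1 with h₁ | h₁
  · rw [pval_pdsP_of_lt (by omega), pval_pdsP_of_lt h₁, pval_pdsP_of_lt h₁]
  rw [pval_pdsP_of_le (b := pdsP b c) h₁ (by omega)]
  rcases lt_or_ge i (a.1 + b.1) with h₂ | h₂
  · rw [pval_pdsP_of_lt (by omega), pval_pdsP_of_le h₁ h₂, pval_pdsP_of_lt (by omega)]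
  · rw [pval_pdsP_of_le (by omega) (by omega), pval_pdsP_of_le (by omega) (by omega), hab,
      Nat.sub_sub, Nat.add_assoc]

lemma psum_nil : psum [] = pempty := rfl

lemma psum_cons (x : PermPt) (l : List PermPt) : psum (x :: l) = pdsP x (psum l) := rfl

lemma psum_append (l l' : List PermPt) : psum (l ++ l') = pdsP (psum l) (psum l') := by
  induction l with
  | nil => rw [List.nil_append, psum_nil, pempty_pdsP]
  | cons x l ih => rw [List.cons_append, psum_cons, psum_cons, ih, pdsP_assoc]

lemma psum_ofFn_succ {s : ℕ} (g : Fin (s + 1) → PermPt) :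
    psum (List.ofFn g) = pdsP (psum (List.ofFn (Fin.init g))) (g (Fin.last s)) := by
  rw [List.ofFn_succ', List.concat_eq_append, psum_append, psum_cons, psum_nil, pdsP_pempty]
  rfl

end DirectSum

section Occurrence

def IsOccurrence (a b : PermPt) (f : ℕ → ℕ) : Prop :=
  (∀ i < a.1, f i < b.1) ∧ (∀ i j, i < j → j < a.1 → f i < f j) ∧
    ∀ i < a.1, ∀ j < a.1, (pval a i ≤ pval a j ↔ pval b (f i) ≤ pval b (f j))

variable {a a' b b' : PermPt}

lemma le_iff_exists_isOccurrence : a ≤ b ↔ ∃ f, IsOccurrence a b f := by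
  constructor
  · rintro ⟨f, hf, hp⟩
    refine ⟨fun i => if h : i < a.1 then f ⟨i, h⟩ else 0, fun i hi => ?_,
      fun i j hij hj => ?_, fun i hi j hj => ?_⟩
    · simp [hi]
    · simp only [dif_pos hj, dif_pos (hij.trans hj)]
      exact hf (Fin.mk_lt_mk.2 hij)
    · simp only [dif_pos hi, dif_pos hj, pval_of_lt hi, pval_of_lt hj, pval_of_lt (f _).2]
      exact hp _ _
  · rintro ⟨f, hb, hm, hp⟩
    refine ⟨fun i => ⟨f i, hb i i.2⟩, fun i j hij => hm i j hij j.2, fun i j => ?_⟩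
    have := hp i i.2 j j.2
    rwa [pval_of_lt i.2, pval_of_lt j.2, pval_of_lt (hb i i.2), pval_of_lt (hb j j.2)] at this

lemma lt_or_exists_eq_add_of_lt_add {m n i : ℕ} (h : i < m + n) : i < m ∨ ∃ k < n, i = m + k :=
  (lt_or_ge i m).imp_right fun h' => ⟨i - m, by omega, by omega⟩

lemma pval_pdsP_lt_pval_pdsP {i j : ℕ} (hi : i < a.1) (hj : a.1 ≤ j) (hj' : j < a.1 + b.1) :
    pval (pdsP a b) i < pval (pdsP a b) j := by
  rw [pval_pdsP_of_lt hi, pval_pdsP_of_le hj hj']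
  exact (pval_lt hi).trans_le (Nat.le_add_right _ _)

lemma IsOccurrence.pdsP_pdsP {f g : ℕ → ℕ} (hf : IsOccurrence a a' f) (hg : IsOccurrence b b' g) :
    IsOccurrence (pdsP a b) (pdsP a' b')
      (fun i => if i < a.1 then f i else a'.1 + g (i - a.1)) := by
  obtain ⟨hfb, hfm, hfp⟩ := hf
  obtain ⟨hgb, hgm, hgp⟩ := hg
  set F := fun i => if i < a.1 then f i else a'.1 + g (i - a.1)
  have hl : ∀ i < a.1, F i = f i := fun i hi => if_pos hi
  have hr : ∀ k, F (a.1 + k) = a'.1 + g k := fun k => by simp [F]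
  have hbound : ∀ k < b.1, a'.1 + g k < (pdsP a' b').1 := fun k hk => by
    have := hgb k hk
    rw [pdsP_fst]
    omega
  refine ⟨fun i hi => ?_, fun i j hij hj => ?_, fun i hi j hj => ?_⟩
  · obtain h | ⟨k, hk, rfl⟩ := lt_or_exists_eq_add_of_lt_add hi
    · exact hl i h ▸ (hfb i h).trans_le (Nat.le_add_right _ _)
    · exact hr k ▸ hbound k hk
  · obtain hj' | ⟨l, hl', rfl⟩ := lt_or_exists_eq_add_of_lt_add hj
    · rw [hl i (hij.trans hj'), hl j hj']
      exact hfm i j hij hj'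
    obtain hi' | ⟨k, -, rfl⟩ := lt_or_exists_eq_add_of_lt_add (hij.trans hj)
    · rw [hl i hi', hr]
      exact (hfb i hi').trans_le (Nat.le_add_right _ _)
    · rw [hr, hr]
      exact Nat.add_lt_add_left (hgm k l (by omega) hl') _
  obtain hi' | ⟨k, hk, rfl⟩ := lt_or_exists_eq_add_of_lt_add hi <;>
    obtain hj' | ⟨l, hl', rfl⟩ := lt_or_exists_eq_add_of_lt_add hj
  · rw [pval_pdsP_of_lt hi', pval_pdsP_of_lt hj', hl i hi', hl j hj',
      pval_pdsP_of_lt (hfb i hi'), pval_pdsP_of_lt (hfb j hj')]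
    exact hfp i hi' j hj'
  · rw [hl i hi', hr]
    exact iff_of_true (pval_pdsP_lt_pval_pdsP hi' (by omega) hj).le
      (pval_pdsP_lt_pval_pdsP (hfb i hi') (by omega) (hbound l hl')).le
  · rw [hl j hj', hr]
    exact iff_of_false (pval_pdsP_lt_pval_pdsP hj' (by omega) hi).not_ge
      (pval_pdsP_lt_pval_pdsP (hfb j hj') (by omega) (hbound k hk)).not_ge
  · rw [hr, hr, pval_pdsP_add hk, pval_pdsP_add hl', pval_pdsP_add (hgb k hk),
      pval_pdsP_add (hgb l hl'), Nat.add_le_add_iff_left, Nat.add_le_add_iff_left]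
    exact hgp k hk l hl'

lemma pdsP_mono (ha : a ≤ a') (hb : b ≤ b') : pdsP a b ≤ pdsP a' b' := by
  obtain ⟨f, hf⟩ := le_iff_exists_isOccurrence.1 ha
  obtain ⟨g, hg⟩ := le_iff_exists_isOccurrence.1 hb
  exact le_iff_exists_isOccurrence.2 ⟨_, hf.pdsP_pdsP hg⟩

lemma le_pdsP_left (a b : PermPt) : a ≤ pdsP a b := by
  simpa only [pdsP_pempty] using pdsP_mono le_rfl (pempty_le b)

lemma le_pdsP_right (a b : PermPt) : b ≤ pdsP a b := by
  simpa only [pempty_pdsP] using pdsP_mono (pempty_le a) le_rfl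

lemma psum_ofFn_mono {t : ℕ} {g g' : Fin t → PermPt} (h : ∀ m, g m ≤ g' m) :
    psum (List.ofFn g) ≤ psum (List.ofFn g') := by
  induction t with
  | zero => simp
  | succ s ih =>
    rw [psum_ofFn_succ, psum_ofFn_succ]
    exact pdsP_mono (ih fun m => h m.castSucc) (h _)

end Occurrence

namespace IsOccurrence

variable {a b c A B : PermPt} {f : ℕ → ℕ}

lemma pdsP_left (h : IsOccurrence (pdsP a b) c f) : IsOccurrence a c f := by
  obtain ⟨hb, hm, hp⟩ := h
  refine ⟨fun i hi => hb i (by rw [pdsP_fst]; omega), fun i j hij hj => hm i j hij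
    (by rw [pdsP_fst]; omega), fun i hi j hj => ?_⟩
  rw [← pval_pdsP_of_lt (b := b) hi, ← pval_pdsP_of_lt (b := b) hj]
  exact hp i (by rw [pdsP_fst]; omega) j (by rw [pdsP_fst]; omega)

lemma pdsP_right (h : IsOccurrence (pdsP a b) c f) : IsOccurrence b c (fun i => f (a.1 + i)) := by
  obtain ⟨hb, hm, hp⟩ := h
  refine ⟨fun i hi => hb _ (by rw [pdsP_fst]; omega), fun i j hij hj => hm _ _ (by omega)
    (by rw [pdsP_fst]; omega), fun i hi j hj => ?_⟩
  rw [← Nat.add_le_add_iff_left (n := a.1), ← pval_pdsP_add hi, ← pval_pdsP_add hj]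
  exact hp _ (by rw [pdsP_fst]; omega) _ (by rw [pdsP_fst]; omega)

lemma of_pdsP_left (h : IsOccurrence a (pdsP A B) f) (hf : ∀ i < a.1, f i < A.1) :
    IsOccurrence a A f := by
  obtain ⟨-, hm, hp⟩ := h
  refine ⟨hf, hm, fun i hi j hj => ?_⟩
  rw [hp i hi j hj, pval_pdsP_of_lt (hf i hi), pval_pdsP_of_lt (hf j hj)]

lemma of_pdsP_right (h : IsOccurrence a (pdsP A B) f) (hf : ∀ i < a.1, A.1 ≤ f i) :
    IsOccurrence a B (fun i => f i - A.1) := by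
  obtain ⟨hb, hm, hp⟩ := h
  refine ⟨fun i hi => ?_, fun i j hij hj => ?_, fun i hi j hj => ?_⟩
  · have h₁ := hb i hi
    have h₂ := hf i hi
    rw [pdsP_fst] at h₁
    show f i - A.1 < B.1
    omega
  · have h₁ := hm i j hij hj
    have h₂ := hf i (by omega)
    show f i - A.1 < f j - A.1
    omega
  rw [hp i hi j hj, pval_pdsP_of_le (hf i hi) (hb i hi), pval_pdsP_of_le (hf j hj) (hb j hj),
    Nat.add_le_add_iff_left]

end IsOccurrence

section Factorization

def SplitsAt (σ : PermPt) (k : ℕ) : Prop :=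
  k ≤ σ.1 ∧ ∀ i < σ.1, (i < k ↔ pval σ i < k)

variable {σ a b c d A B : PermPt} {k : ℕ}

lemma splitsAt_pdsP (a b : PermPt) : SplitsAt (pdsP a b) a.1 :=
  ⟨Nat.le_add_right _ _, fun i hi => by
    rcases lt_or_ge i a.1 with h | h
    · rw [pval_pdsP_of_lt h]
      exact iff_of_true h (pval_lt h)
    · rw [pval_pdsP_of_le h hi]
      exact iff_of_false (by omega) (by omega)⟩

lemma splitsAt_of_forall_lt (hk : k ≤ σ.1)
    (h : ∀ i < k, ∀ j, k ≤ j → j < σ.1 → pval σ i < pval σ j) : SplitsAt σ k := by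
  refine ⟨hk, fun i hi => ⟨fun hik => ?_, fun hv => ?_⟩⟩
  · have hsub : {j ∈ range σ.1 | pval σ j < pval σ i} ⊆ (range k).erase i := fun j hj => by
      obtain ⟨hj, hlt⟩ := mem_filter.1 hj
      refine mem_erase.2 ⟨by rintro rfl; omega, mem_range.2 (not_le.1 fun hkj => ?_)⟩
      have := h i hik j hkj (mem_range.1 hj)
      omega
    have := card_le_card hsub
    rw [card_filter_pval_lt hi, card_erase_of_mem (mem_range.2 hik), card_range] at this
    omega
  · by_contra hik
    have hsub : range k ⊆ {j ∈ range σ.1 | pval σ j < pval σ i} := fun j hj =>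
      mem_filter.2 ⟨mem_range.2 (by simp at hj; omega), h j (mem_range.1 hj) i (by omega) hi⟩
    have := card_le_card hsub
    rw [card_filter_pval_lt hi, card_range] at this
    omega

lemma exists_pdsP_of_splitsAt (h : SplitsAt σ k) : ∃ a b, σ = pdsP a b ∧ a.1 = k := by
  obtain ⟨hk, hs⟩ := h
  have hhigh : ∀ i < σ.1 - k, k ≤ pval σ (k + i) ∧ pval σ (k + i) < σ.1 := fun i hi =>
    ⟨not_lt.1 fun h' => by have := (hs _ (by omega)).2 h'; omega, pval_lt (by omega)⟩
  obtain ⟨a, rfl, ha⟩ : ∃ a : PermPt, a.1 = k ∧ ∀ i < k, pval a i = pval σ i :=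
    ⟨.ofInjOn k (pval σ) (fun i hi => (hs i (by omega)).1 hi)
      (fun i hi j hj e => (pval_inj (by omega) (by omega)).1 e), rfl, fun _ hi => pval_ofInjOn hi⟩
  obtain ⟨b, hb1, hb⟩ : ∃ b : PermPt, b.1 = σ.1 - a.1 ∧
      ∀ i < σ.1 - a.1, pval b i = pval σ (a.1 + i) - a.1 := by
    refine ⟨.ofInjOn (σ.1 - a.1) (fun i => pval σ (a.1 + i) - a.1)
      (fun i hi => by have := hhigh i hi; omega) (fun i hi j hj e => ?_), rfl,
      fun _ hi => pval_ofInjOn hi⟩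
    have := hhigh i hi
    have := hhigh j hj
    have := (pval_inj (a := σ) (i := a.1 + i) (j := a.1 + j) (by omega) (by omega)).1 (by omega)
    omega
  refine ⟨a, b, PermPt.ext_pval (by rw [pdsP_fst]; omega) fun i hi => ?_, rfl⟩
  rcases lt_or_ge i a.1 with h' | h'
  · rw [pval_pdsP_of_lt h', ha i h']
  · have := hhigh (i - a.1) (by omega)
    rw [Nat.add_sub_cancel' h'] at this
    rw [pval_pdsP_of_le h' (by omega), hb _ (by omega), Nat.add_sub_cancel' h']
    omega

lemma pdsP_inj_of_len_eq (h : pdsP a b = pdsP c d) (hl : a.1 = c.1) : a = c ∧ b = d := by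
  have hlen : b.1 = d.1 := by
    have := congrArg Sigma.fst h
    rw [pdsP_fst, pdsP_fst] at this
    omega
  refine ⟨PermPt.ext_pval hl fun i hi => ?_, PermPt.ext_pval hlen fun i hi => ?_⟩
  · rw [← pval_pdsP_of_lt (b := b) hi, h, pval_pdsP_of_lt (hl ▸ hi)]
  · have e := congrArg (pval · (a.1 + i)) h
    rw [pval_pdsP_add hi, hl, pval_pdsP_add (hlen ▸ hi)] at e
    omega

lemma exists_of_pdsP_eq_pdsP (h : pdsP a b = pdsP c d) (hl : a.1 ≤ c.1) :
    ∃ e, c = pdsP a e ∧ b = pdsP e d := by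
  have hc : SplitsAt c a.1 := ⟨hl, fun i hi => by
    have := (splitsAt_pdsP a b).2 i (by rw [h, pdsP_fst]; omega)
    rwa [h, pval_pdsP_of_lt hi] at this⟩
  obtain ⟨a', e, rfl, ha'⟩ := exists_pdsP_of_splitsAt hc
  rw [pdsP_assoc] at h
  obtain ⟨rfl, rfl⟩ := pdsP_inj_of_len_eq h ha'.symm
  exact ⟨e, rfl, rfl⟩

lemma len_pos_of_ne_pempty (h : a ≠ pempty) : 0 < a.1 :=
  Nat.pos_of_ne_zero fun h' => h (eq_pempty_of_len_eq_zero h')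

lemma decomp_pdsP (ha : a ≠ pempty) (hb : b ≠ pempty) : Decomp (pdsP a b).2 := by
  have := len_pos_of_ne_pempty ha
  have := len_pos_of_ne_pempty hb
  refine ⟨a.1, by omega, by rw [pdsP_fst]; omega, fun i hi => ?_⟩
  have := ((splitsAt_pdsP a b).2 i i.2).1 hi
  rwa [pval_of_lt i.2] at this

lemma eq_pempty_or_eq_pempty_of_not_decomp (hc : ¬ Decomp c.2) (h : c = pdsP a b) :
    a = pempty ∨ b = pempty := by
  by_contra! hab
  exact hc (h ▸ decomp_pdsP hab.1 hab.2)

lemma ne_pempty_of_len_pos (h : 0 < a.1) : a ≠ pempty := by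
  rintro rfl
  exact absurd h (lt_irrefl 0)

lemma pdsP_eq_pempty_iff : pdsP a b = pempty ↔ a = pempty ∧ b = pempty := by
  refine ⟨fun h => ?_, fun ⟨ha, hb⟩ => by rw [ha, hb, pdsP_pempty]⟩
  have := congrArg Sigma.fst h
  rw [pdsP_fst, pempty_fst] at this
  exact ⟨eq_pempty_of_len_eq_zero (by omega), eq_pempty_of_len_eq_zero (by omega)⟩

lemma pdsP_right_inj : pdsP a b = pdsP a c ↔ b = c :=
  ⟨fun h => (pdsP_inj_of_len_eq h rfl).2, fun h => h ▸ rfl⟩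

lemma pdsP_eq_iff_of_not_decomp (hc : ¬ Decomp c.2) (ha : a ≠ pempty) :
    pdsP a b = c ↔ b = pempty ∧ a = c := by
  refine ⟨fun h => ?_, fun ⟨hb, ha⟩ => by rw [hb, pdsP_pempty, ha]⟩
  obtain ha' | rfl := eq_pempty_or_eq_pempty_of_not_decomp hc h.symm
  · exact absurd ha' ha
  · exact ⟨rfl, (pdsP_pempty a).symm.trans h⟩

lemma exists_lt_iff_lt_of_strictMonoOn {n A : ℕ} {f : ℕ → ℕ} (hf : StrictMonoOn f (Set.Iio n)) :
    ∃ k ≤ n, ∀ i < n, (i < k ↔ f i < A) := by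
  have hex : ∃ k, n ≤ k ∨ A ≤ f k := ⟨n, Or.inl le_rfl⟩
  refine ⟨Nat.find hex, Nat.find_min' hex (Or.inl le_rfl),
    fun i hi => ⟨fun hik => ?_, fun hfi => ?_⟩⟩
  · exact not_le.1 fun h => Nat.find_min hex hik (Or.inr h)
  · by_contra hik
    rcases Nat.find_spec hex with h | h
    · omega
    · rcases (not_lt.1 hik).lt_or_eq with hlt | heq
      · have := hf (hlt.trans hi) hi hlt
        omega
      · rw [heq] at h
        omega

lemma exists_pdsP_of_le_pdsP (h : σ ≤ pdsP A B) :
    ∃ a b, σ = pdsP a b ∧ a ≤ A ∧ b ≤ B := by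
  obtain ⟨f, hf⟩ := le_iff_exists_isOccurrence.1 h
  obtain ⟨k, hk, hfk⟩ := exists_lt_iff_lt_of_strictMonoOn (A := A.1)
    fun i _ j hj hij => hf.2.1 i j hij hj
  have hsplit : SplitsAt σ k := splitsAt_of_forall_lt hk fun i hi j hkj hj => by
    have hfi := (hfk i (by omega)).1 hi
    have hfj := not_lt.1 ((hfk j hj).not.1 (by omega))
    have := pval_lt hfi
    rw [← not_le, hf.2.2 j hj i (by omega), pval_pdsP_of_lt hfi,
      pval_pdsP_of_le hfj (hf.1 j hj)]
    omega
  obtain ⟨a, b, rfl, rfl⟩ := exists_pdsP_of_splitsAt hsplit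
  refine ⟨a, b, rfl, le_iff_exists_isOccurrence.2 ⟨f, ?_⟩,
    le_iff_exists_isOccurrence.2 ⟨fun i => f (a.1 + i) - A.1, ?_⟩⟩
  · exact hf.pdsP_left.of_pdsP_left fun i hi => (hfk i (by rw [pdsP_fst]; omega)).1 hi
  · exact hf.pdsP_right.of_pdsP_right fun i hi =>
      not_lt.1 ((hfk _ (by rw [pdsP_fst]; omega)).not.1 (by omega))

end Factorization

section MinLeftFactor

variable {σ h a b A C P β : PermPt}

lemma exists_len_pdsP_right_le (σ h : PermPt) : ∃ k, ∃ a b, σ = pdsP a b ∧ a.1 = k ∧ b ≤ h :=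
  ⟨σ.1, σ, pempty, (pdsP_pempty σ).symm, rfl, pempty_le h⟩

-- The shortest left factor `L` of a factorisation `σ = L ⊕ R` with `R ≤ h`.
noncomputable def minLeftFactor (σ h : PermPt) : PermPt :=
  (Nat.find_spec (exists_len_pdsP_right_le σ h)).choose

lemma exists_eq_pdsP_minLeftFactor (σ h : PermPt) :
    ∃ b, σ = pdsP (minLeftFactor σ h) b ∧ b ≤ h := by
  obtain ⟨b, hσ, -, hb⟩ := (Nat.find_spec (exists_len_pdsP_right_le σ h)).choose_spec
  exact ⟨b, hσ, hb⟩

lemma len_minLeftFactor_le (hσ : σ = pdsP a b) (hb : b ≤ h) : (minLeftFactor σ h).1 ≤ a.1 := by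
  obtain ⟨-, -, hlen, -⟩ := (Nat.find_spec (exists_len_pdsP_right_le σ h)).choose_spec
  exact hlen ▸ Nat.find_min' _ ⟨a, b, hσ, rfl, hb⟩

lemma exists_eq_minLeftFactor_pdsP (hσ : σ = pdsP a b) (hb : b ≤ h) :
    ∃ e, a = pdsP (minLeftFactor σ h) e := by
  obtain ⟨R, hR, -⟩ := exists_eq_pdsP_minLeftFactor σ h
  obtain ⟨e, he, -⟩ := exists_of_pdsP_eq_pdsP (hR.symm.trans hσ) (len_minLeftFactor_le hσ hb)
  exact ⟨e, he⟩

lemma le_pdsP_iff_minLeftFactor_le : σ ≤ pdsP A h ↔ minLeftFactor σ h ≤ A := by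
  constructor
  · intro hle
    obtain ⟨a, b, hσ, ha, hb⟩ := exists_pdsP_of_le_pdsP hle
    obtain ⟨e, rfl⟩ := exists_eq_minLeftFactor_pdsP hσ hb
    exact (le_pdsP_left _ _).trans ha
  · intro hle
    obtain ⟨R, hR, hRh⟩ := exists_eq_pdsP_minLeftFactor σ h
    exact hR ▸ pdsP_mono hle hRh

lemma minLeftFactor_eq_pempty_iff : minLeftFactor σ h = pempty ↔ σ ≤ h := by
  rw [← le_pempty_iff, ← le_pdsP_iff_minLeftFactor_le, pempty_pdsP]

lemma minLeftFactor_eq_pdsP_iff (hP : ¬ Decomp P.2) (hP₀ : P ≠ pempty)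
    (hσ : σ = pdsP (pdsP C P) β) :
    minLeftFactor σ h = pdsP C P ↔ β ≤ h ∧ ¬ pdsP P β ≤ h := by
  obtain ⟨R, hR, hRh⟩ := exists_eq_pdsP_minLeftFactor σ h
  have hσ' : σ = pdsP C (pdsP P β) := hσ.trans (pdsP_assoc C P β)
  constructor
  · intro hL
    rw [hL] at hR
    obtain ⟨-, rfl⟩ := pdsP_inj_of_len_eq (hR.symm.trans hσ) rfl
    refine ⟨hRh, fun hPβ => ?_⟩
    have := len_minLeftFactor_le hσ' hPβ
    rw [hL, pdsP_fst] at this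
    exact absurd this (by have := len_pos_of_ne_pempty hP₀; omega)
  · rintro ⟨hβ, hPβ⟩
    rcases le_total (minLeftFactor σ h).1 C.1 with hl | hl
    · obtain ⟨e, -, rfl⟩ := exists_of_pdsP_eq_pdsP (hR.symm.trans hσ') hl
      exact absurd ((le_pdsP_right e _).trans hRh) hPβ
    obtain ⟨e, hLe, hPβe⟩ := exists_of_pdsP_eq_pdsP (hσ'.symm.trans hR) hl
    obtain ⟨e', he'⟩ := exists_eq_minLeftFactor_pdsP hσ hβ
    rw [hLe, pdsP_assoc] at he'
    obtain ⟨-, hPe⟩ := pdsP_inj_of_len_eq he' rfl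
    rcases eq_pempty_or_eq_pempty_of_not_decomp hP hPe with rfl | rfl
    · rw [pempty_pdsP] at hPβe
      exact absurd (hPβe ▸ hRh) hPβ
    · rw [hPe, pdsP_pempty, hLe]

end MinLeftFactor

-- The factor `f(m)` of the statement.
noncomputable def weight {t : ℕ} (τf : Fin t → PermPt) (m : Fin t) (g : PermPt) : ℤ :=
  if g = pempty ∧ ∃ _ : 1 ≤ (m : ℕ),
      τf ⟨(m : ℕ) - 1, lt_of_le_of_lt (Nat.sub_le _ _) m.isLt⟩ = τf m
  then mu ℤ g (τf m) + 1 else mu ℤ g (τf m)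

lemma weight_castSucc {s : ℕ} (τf : Fin (s + 1) → PermPt) (m : Fin s) (g : PermPt) :
    weight τf m.castSucc g = weight (Fin.init τf) m g := rfl

lemma weight_zero (τf : Fin 1 → PermPt) (g : PermPt) : weight τf 0 g = mu ℤ g (τf 0) :=
  if_neg fun ⟨_, h, _⟩ => absurd h (by simp)

lemma weight_last {s : ℕ} (τf : Fin (s + 2) → PermPt) (g : PermPt) :
    weight τf (Fin.last (s + 1)) g = mu ℤ g (τf (Fin.last (s + 1))) +
      if g = pempty ∧ τf (Fin.last s).castSucc = τf (Fin.last (s + 1)) then 1 else 0 := by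
  by_cases hc : g = pempty ∧ τf (Fin.last s).castSucc = τf (Fin.last (s + 1))
  · rw [weight, if_pos ⟨hc.1, by simp, hc.2⟩, if_pos hc]
  · rw [weight, if_neg fun ⟨h₁, _, h₂⟩ => hc ⟨h₁, h₂⟩, if_neg hc, add_zero]

noncomputable def coverSum {t : ℕ} (τf : Fin t → PermPt) (σ : PermPt) : ℤ :=
  ∑ g ∈ Fintype.piFinset (fun m => Icc pempty (τf m)) with σ ≤ psum (List.ofFn g),
    ∏ m, weight τf m (g m)

lemma coverSum_zero (τf : Fin 0 → PermPt) (σ : PermPt) :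
    coverSum τf σ = if σ = pempty then 1 else 0 := by
  simp only [coverSum, Fintype.piFinset_of_isEmpty, univ_unique, List.ofFn_zero, psum_nil,
    le_pempty_iff, sum_filter, sum_singleton, univ_eq_empty, prod_empty]

lemma coverSum_succ {s : ℕ} (τf : Fin (s + 1) → PermPt) (σ : PermPt) :
    coverSum τf σ = ∑ h ∈ Icc pempty (τf (Fin.last s)),
      coverSum (Fin.init τf) (minLeftFactor σ h) * weight τf (Fin.last s) h := by
  have hpi : Fintype.piFinset (fun m => Icc pempty (τf m)) =
      (Icc pempty (τf (Fin.last s)) ×ˢ Fintype.piFinset (Fin.init fun m => Icc pempty (τf m))).map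
        (Fin.snocEquiv _).toEmbedding := by
    simpa using filter_piFinset_eq_map_snocEquiv (fun m => Icc pempty (τf m)) (fun _ => True)
  rw [coverSum, sum_filter, hpi, sum_map, sum_product]
  refine sum_congr rfl fun h _ => ?_
  rw [coverSum, sum_filter, sum_mul]
  refine sum_congr rfl fun g _ => ?_
  simp only [Equiv.toEmbedding_apply, Fin.snocEquiv, Equiv.coe_fn_mk, psum_ofFn_succ, Fin.init_snoc,
    Fin.snoc_last, le_pdsP_iff_minLeftFactor_le, Fin.prod_univ_castSucc, Fin.snoc_castSucc,
    weight_castSucc, ite_mul, zero_mul]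

section SumEvaluation

variable {P τ : PermPt}

lemma sum_Icc_indicator_pempty (a τ : PermPt) (p : Prop) [Decidable p] :
    ∑ h ∈ Icc a τ, (if h = pempty ∧ p then 1 else 0 : ℤ) = if a = pempty ∧ p then 1 else 0 := by
  by_cases hp : p
  · simp only [hp, and_true, sum_ite_eq', mem_Icc, le_pempty_iff, pempty_le, and_true]
  · simp [hp]

lemma sum_Icc_minLeftFactor_eq_pempty (σ τ : PermPt) :
    ∑ h ∈ Icc pempty τ, (if minLeftFactor σ h = pempty then 1 else 0) * mu ℤ h τ =
      if σ = τ then 1 else 0 := by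
  simp_rw [minLeftFactor_eq_pempty_iff, ite_mul, one_mul, zero_mul, ← sum_filter]
  rw [← sum_Icc_mu_left σ τ]
  congr 1
  ext h
  simp only [mem_filter, mem_Icc, pempty_le, true_and]
  exact and_comm

lemma sum_Icc_indicator_mul_weight (hτ : ¬ Decomp τ.2) (hP : P ≠ pempty) (β : PermPt) :
    ∑ h ∈ Icc pempty τ, (if β ≤ h ∧ ¬ pdsP P β ≤ h then 1 else 0) *
      (mu ℤ h τ + if h = pempty ∧ P = τ then 1 else 0) = if β = τ then 1 else 0 := by
  have hsum : ∀ x, ∑ h ∈ Icc x τ, (mu ℤ h τ + if h = pempty ∧ P = τ then 1 else 0) =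
      (if x = τ then 1 else 0) + if x = pempty ∧ P = τ then 1 else 0 := fun x => by
    rw [sum_add_distrib, sum_Icc_mu_left, sum_Icc_indicator_pempty]
  have hsub : Icc (pdsP P β) τ ⊆ Icc β τ := Icc_subset_Icc_left (le_pdsP_right P β)
  have hfilter : {h ∈ Icc pempty τ | β ≤ h ∧ ¬ pdsP P β ≤ h} = Icc β τ \ Icc (pdsP P β) τ := by
    ext h
    simp only [mem_filter, mem_sdiff, mem_Icc, pempty_le, true_and]
    tauto
  simp_rw [ite_mul, one_mul, zero_mul]
  rw [← sum_filter, hfilter, eq_sub_of_add_eq (sum_sdiff hsub (f := fun h =>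
    mu ℤ h τ + if h = pempty ∧ P = τ then 1 else 0)), hsum, hsum]
  simp [pdsP_eq_iff_of_not_decomp hτ hP, pdsP_eq_pempty_iff, hP]

lemma sum_Icc_minLeftFactor_eq_pdsP (hP : ¬ Decomp P.2) (hP₀ : P ≠ pempty) (hτ : ¬ Decomp τ.2)
    (C σ : PermPt) :
    ∑ h ∈ Icc pempty τ, (if minLeftFactor σ h = pdsP C P then 1 else 0) *
      (mu ℤ h τ + if h = pempty ∧ P = τ then 1 else 0) =
      if σ = pdsP (pdsP C P) τ then 1 else 0 := by
  by_cases hσ : ∃ β, σ = pdsP (pdsP C P) β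
  · obtain ⟨β, hσ⟩ := hσ
    simp_rw [minLeftFactor_eq_pdsP_iff hP hP₀ hσ, hσ, pdsP_right_inj]
    exact sum_Icc_indicator_mul_weight hτ hP₀ β
  · rw [not_exists] at hσ
    rw [if_neg (hσ τ)]
    refine sum_eq_zero fun h _ => ?_
    rw [if_neg fun hL => ?_, zero_mul]
    obtain ⟨R, hR, -⟩ := exists_eq_pdsP_minLeftFactor σ h
    exact hσ R (hL ▸ hR)

end SumEvaluation

theorem coverSum_eq_ite {t : ℕ} (τf : Fin t → PermPt)
    (hτf : ∀ m, 0 < (τf m).1 ∧ ¬ Decomp (τf m).2) (σ : PermPt) :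
    coverSum τf σ = if σ = psum (List.ofFn τf) then 1 else 0 := by
  induction t generalizing σ with
  | zero => rw [coverSum_zero, List.ofFn_zero, psum_nil]
  | succ s ih =>
    rw [coverSum_succ]
    simp_rw [ih (Fin.init τf) (fun m => hτf m.castSucc)]
    rcases s with _ | s
    · simp only [psum_ofFn_succ, List.ofFn_zero, psum_nil, pempty_pdsP, Fin.last_zero,
        weight_zero]
      exact sum_Icc_minLeftFactor_eq_pempty σ _
    · simp_rw [weight_last, psum_ofFn_succ (Fin.init τf)]
      rw [psum_ofFn_succ τf, psum_ofFn_succ (Fin.init τf)]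
      exact sum_Icc_minLeftFactor_eq_pdsP (hτf _).2 (ne_pempty_of_len_pos (hτf _).1) (hτf _).2 _ σ

noncomputable def decompSum {t : ℕ} (τf : Fin t → PermPt) (σ : PermPt) : ℤ :=
  ∑ g ∈ Fintype.piFinset (fun m => Icc pempty (τf m)) with σ = psum (List.ofFn g),
    ∏ m, weight τf m (g m)

lemma sum_Icc_decompSum {t : ℕ} (τf : Fin t → PermPt) (σ : PermPt) :
    ∑ x ∈ Icc σ (psum (List.ofFn τf)), decompSum τf x = coverSum τf σ := by
  rw [coverSum, ← sum_fiberwise_of_maps_to (g := fun g => psum (List.ofFn g))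
    (t := Icc σ (psum (List.ofFn τf))) fun g hg => ?_]
  · refine sum_congr rfl fun x hx => ?_
    rw [decompSum, filter_filter]
    congr 1
    ext g
    simp only [mem_filter]
    constructor
    · rintro ⟨hg, rfl⟩
      exact ⟨hg, (mem_Icc.1 hx).1, rfl⟩
    · rintro ⟨hg, -, rfl⟩
      exact ⟨hg, rfl⟩
  · obtain ⟨hg, hσ⟩ := mem_filter.1 hg
    refine mem_Icc.2 ⟨hσ, psum_ofFn_mono fun m => ?_⟩
    exact (mem_Icc.1 (Fintype.mem_piFinset.1 hg m)).2

theorem decompSum_eq_mu {t : ℕ} {τf : Fin t → PermPt}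
    (hτf : ∀ m, 0 < (τf m).1 ∧ ¬ Decomp (τf m).2) (σ : PermPt) :
    decompSum τf σ = mu ℤ σ (psum (List.ofFn τf)) := by
  by_cases hσ : σ ≤ psum (List.ofFn τf)
  · exact eq_mu_of_sum_Icc_left (fun a _ => by rw [sum_Icc_decompSum, coverSum_eq_ite τf hτf]) hσ
  · rw [apply_eq_zero_of_not_le hσ, decompSum, filter_false_of_mem, sum_empty]
    rintro g hg rfl
    exact hσ (psum_ofFn_mono fun m => (mem_Icc.1 (Fintype.mem_piFinset.1 hg m)).2)

theorem mobius_decomposable_general (mu : PermPt → PermPt → ℤ) (hmu : IsMobius mu)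
    (σ τ : PermPt) (t : ℕ) (τf : Fin t → PermPt)
    (hcomp : ∀ m : Fin t, 0 < (τf m).1 ∧ ¬ Decomp (τf m).2)
    (hτ : τ = psum (List.ofFn τf)) :
    mu σ τ =
      ∑ᶠ g ∈ {g : Fin t → PermPt |
          σ = psum (List.ofFn g) ∧ ∀ m : Fin t, ple (g m) (τf m)},
        ∏ m : Fin t,
          (if g m = pempty ∧ ∃ _ : 1 ≤ (m : ℕ),
              τf ⟨(m : ℕ) - 1, lt_of_le_of_lt (Nat.sub_le _ _) m.isLt⟩ = τf m
           then mu (g m) (τf m) + 1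
           else mu (g m) (τf m)) := by
  obtain rfl := hmu.eq_mu
  subst hτ
  have hset : {g : Fin t → PermPt | σ = psum (List.ofFn g) ∧ ∀ m, ple (g m) (τf m)} =
      ↑({g ∈ Fintype.piFinset (fun m => Icc pempty (τf m)) | σ = psum (List.ofFn g)}) := by
    ext g
    simp only [Set.mem_ofPred_eq, coe_filter, Fintype.mem_piFinset, mem_Icc, pempty_le, true_and]
    exact and_comm
  rw [hset, finsum_mem_coe_finset]
  exact (decompSum_eq_mu hcomp σ).symm

/-- Recursion for the Möbius function of a decomposable permutation `τ` with
finest decomposition `τ = τ₁ ⊕ ⋯ ⊕ τ_t` (`t ≥ 2`, the components nonempty and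
indecomposable): `μ(σ,τ)` is the sum over all decompositions
`σ = σ̃₁ ⊕ ⋯ ⊕ σ̃_t` with `σ̃_m ≤ τ_m` (empty components allowed) of the
product of `μ(σ̃_m, τ_m) + 1` when `σ̃_m = ∅` and `τ_{m−1} = τ_m`, and
`μ(σ̃_m, τ_m)` otherwise. -/
theorem mobius_decomposable (mu : PermPt → PermPt → ℤ) (hmu : IsMobius mu)
    (σ τ : PermPt) (t : ℕ) (ht : 2 ≤ t) (τf : Fin t → PermPt)
    (hcomp : ∀ m : Fin t, 0 < (τf m).1 ∧ ¬ Decomp (τf m).2)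
    (hτ : τ = psum (List.ofFn τf)) :
    mu σ τ =
      ∑ᶠ g ∈ {g : Fin t → PermPt |
          σ = psum (List.ofFn g) ∧ ∀ m : Fin t, ple (g m) (τf m)},
        ∏ m : Fin t,
          (if g m = pempty ∧ ∃ _ : 1 ≤ (m : ℕ),
              τf ⟨(m : ℕ) - 1, lt_of_le_of_lt (Nat.sub_le _ _) m.isLt⟩ = τf m
           then mu (g m) (τf m) + 1
           else mu (g m) (τf m)) :=
  mobius_decomposable_general mu hmu σ τ t τf hcomp hτ
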